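/- arXiv:1602.04689 — 2 statements merged into one kernel-verified Lean document; each statement's English description precedes it below -/
import Mathlib

section
/- Let G be a finite p-group with |G : G'| = p^2, |γ₃(G) : γ₄(G)| = p, and C = C_G(G'/γ₄(G)) the centralizer of G'/γ₄(G) in G. Then C is a maximal subgroup of G and C' ≤ γ₄(G). -/
/-!
Pass to `Q = G ⧸ γ₄(G)` (Mathlib's `lowerCentralSeries n` is `γₙ₊₁`), where `γ₃(Q)` is central
of order `p`. As `Q ⧸ Q'` has order `p²`, it is generated by two elements, and in the class-two
group `Q ⧸ γ₃(Q)` the commutator map is bilinear, so its derived subgroup is cyclic; hence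
`Q' = ⟨w⟩ γ₃(Q)` for a single `w`. The centralizer `C` of `Q'` is then the kernel of the
homomorphism `g ↦ ⁅g, w⁆` into `γ₃(Q)`, so `|Q : C|` divides `p`, and it is not `1` because
`⁅Q', Q⁆ = γ₃(Q) ≠ 1`. Finally `Q' ≤ C` is central in `C` with quotient of prime order, so `C`
is abelian.
-/

open scoped commutatorElement

open Subgroup

section

variable {G : Type*} [Group G]

theorem commutatorElement_mul_left_of_mem_center {x y z : G} (h : ⁅y, z⁆ ∈ center G) :
    ⁅x * y, z⁆ = ⁅x, z⁆ * ⁅y, z⁆ := by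
  rw [commutatorElement_mul_left_eq_conj_mul, mem_center_iff.1 h x, mul_inv_cancel_right,
    mem_center_iff.1 h]

def commutatorElementLeftHom (z : G) (hz : ∀ g : G, ⁅g, z⁆ ∈ center G) : G →* G :=
  MonoidHom.mk' (fun g ↦ ⁅g, z⁆) fun _ y ↦ commutatorElement_mul_left_of_mem_center (hz y)

theorem ker_commutatorElementLeftHom (z : G) (hz : ∀ g : G, ⁅g, z⁆ ∈ center G) :
    (commutatorElementLeftHom z hz).ker = centralizer {z} := by
  ext g
  rw [MonoidHom.mem_ker, mem_centralizer_singleton_iff]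
  exact commutatorElement_eq_one_iff_mul_comm

theorem index_centralizer_singleton_dvd_card {z : G} {Z : Subgroup G} (hZ : Z ≤ center G)
    (hz : ∀ g : G, ⁅g, z⁆ ∈ Z) : (centralizer {z}).index ∣ Nat.card Z := by
  rw [← ker_commutatorElementLeftHom z fun g ↦ hZ (hz g), index_ker]
  exact card_dvd_of_le (by rintro _ ⟨g, rfl⟩; exact hz g)

theorem commutator_le_of_commutatorElement_mem (hG : commutator G ≤ center G) {s : Set G}
    (hs : closure s = ⊤) {W : Subgroup G} (hW : ∀ x ∈ s, ∀ y ∈ s, ⁅x, y⁆ ∈ W) :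
    commutator G ≤ W := by
  have hcen : ∀ z g : G, ⁅g, z⁆ ∈ center G := fun z g ↦
    hG (commutator_mem_commutator (mem_top g) (mem_top z))
  have hall : ∀ z, (∀ x ∈ s, ⁅x, z⁆ ∈ W) → ∀ g, ⁅g, z⁆ ∈ W := fun z h g ↦
    (closure_le (W.comap (commutatorElementLeftHom z (hcen z)))).2 h (hs ▸ mem_top g)
  have hleft : ∀ g, ∀ y ∈ s, ⁅g, y⁆ ∈ W := fun g y hy ↦ hall y (fun x hx ↦ hW x hx y hy) g
  rw [commutator_eq_closure, closure_le]
  rintro _ ⟨g, h, rfl⟩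
  refine hall h (fun x hx ↦ ?_) g
  rw [← commutatorElement_inv, inv_mem_iff]
  exact hleft h x hx

theorem exists_closure_pair_eq_top {A : Type*} [Group A] {p : ℕ} (hp : p.Prime)
    (hA : Nat.card A = p ^ 2) : ∃ a b : A, closure {a, b} = ⊤ := by
  have : Finite A := Nat.finite_of_card_ne_zero (by simp [hA, hp.ne_zero])
  have : Nontrivial A :=
    Finite.one_lt_card_iff_nontrivial.1 (hA ▸ Nat.one_lt_pow two_ne_zero hp.one_lt)
  obtain ⟨a, ha⟩ := exists_ne (1 : A)
  by_cases hcyc : ∀ b, b ∈ zpowers a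
  · exact ⟨a, a, by rw [Set.pair_eq_singleton, ← zpowers_eq_closure, eq_top_iff']; exact hcyc⟩
  obtain ⟨b, hb⟩ := not_forall.1 hcyc
  have hle : zpowers a ≤ closure {a, b} := zpowers_le.2 (subset_closure (Set.mem_insert a {b}))
  obtain ⟨i, -, hi⟩ := (Nat.dvd_prime_pow hp).1 (hA ▸ card_subgroup_dvd_card (zpowers a))
  obtain ⟨j, hj2, hj⟩ := (Nat.dvd_prime_pow hp).1 (hA ▸ card_subgroup_dvd_card (closure {a, b}))
  have hi0 : i ≠ 0 := by
    rintro rfl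
    exact ha (zpowers_eq_bot.1 (card_eq_one.1 hi))
  have hij : i < j := by
    rw [← Nat.pow_lt_pow_iff_right hp.one_lt, ← hi, ← hj]
    by_contra! h
    exact hb (eq_of_le_of_card_ge hle h ▸ subset_closure (Set.mem_insert_of_mem a rfl))
  exact ⟨a, b, card_eq_iff_eq_top _ |>.1 (by rw [hj, hA, show j = 2 by omega])⟩

theorem closure_sup_eq_top_of_closure_image_mk (N : Subgroup G) [N.Normal] {s : Set G}
    (hs : closure (QuotientGroup.mk' N '' s) = ⊤) : closure s ⊔ N = ⊤ := by
  rw [← MonoidHom.map_closure] at hs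
  simpa [comap_map_eq] using congrArg (comap (QuotientGroup.mk' N)) hs

theorem exists_commutator_eq_zpowers {p : ℕ} (hp : p.Prime) (hG : commutator G ≤ center G)
    (hidx : (commutator G).index = p ^ 2) : ∃ w, commutator G = zpowers w := by
  obtain ⟨a', b', hab⟩ := exists_closure_pair_eq_top hp hidx
  obtain ⟨a, rfl⟩ := QuotientGroup.mk'_surjective (commutator G) a'
  obtain ⟨b, rfl⟩ := QuotientGroup.mk'_surjective (commutator G) b'
  have hgen : closure ({a, b} ∪ commutator G) = ⊤ := by
    rw [Subgroup.closure_union, closure_eq]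
    exact closure_sup_eq_top_of_closure_image_mk _ (by rwa [Set.image_pair])
  have hcentral : ∀ x ∈ commutator G, ∀ y : G, ⁅x, y⁆ = 1 := fun x hx y ↦
    commutatorElement_eq_one_iff_mul_comm.2 (mem_center_iff.1 (hG hx) y).symm
  refine ⟨⁅a, b⁆, le_antisymm (commutator_le_of_commutatorElement_mem hG hgen ?_)
    (zpowers_le.2 (commutator_mem_commutator (mem_top a) (mem_top b)))⟩
  rintro x (hx | hx) y (hy | hy)
  · rcases hx with rfl | rfl <;> rcases hy with rfl | rfl
    · rw [commutatorElement_self]; exact one_mem _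
    · exact mem_zpowers _
    · rw [← inv_mem_iff, commutatorElement_inv]; exact mem_zpowers _
    · rw [commutatorElement_self]; exact one_mem _
  · rw [← inv_mem_iff, commutatorElement_inv, hcentral y hy]; exact one_mem _
  all_goals rw [hcentral x hx]; exact one_mem _

theorem mem_comap_centralizer_map_mk'_iff (N : Subgroup G) [N.Normal] (H : Subgroup G) (g : G) :
    g ∈ (centralizer (H.map (QuotientGroup.mk' N) : Set (G ⧸ N))).comap (QuotientGroup.mk' N) ↔
      ∀ x ∈ H, ⁅g, x⁆ ∈ N := by
  simp only [mem_comap, mem_centralizer_iff, coe_map, Set.forall_mem_image]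
  refine forall₂_congr fun x _ ↦ ?_
  rw [← QuotientGroup.eq_one_iff, ← QuotientGroup.mk'_apply, map_commutatorElement,
    commutatorElement_eq_one_iff_mul_comm, eq_comm]

theorem map_top_lowerCentralSeries_of_surjective {H : Type*} [Group H] {f : G →* H}
    (hf : Function.Surjective f) (n : ℕ) :
    ((⊤ : Subgroup G).lowerCentralSeries n).map f = (⊤ : Subgroup H).lowerCentralSeries n := by
  rw [map_lowerCentralSeries, map_top_of_surjective f hf]

theorem top_lowerCentralSeries_succ_eq_bot_iff (n : ℕ) :
    (⊤ : Subgroup G).lowerCentralSeries (n + 1) = ⊥ ↔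
      (⊤ : Subgroup G).lowerCentralSeries n ≤ center G :=
  commutator_top_right_eq_bot_iff_le_center

theorem top_lowerCentralSeries_le_commutator {n : ℕ} (hn : 1 ≤ n) :
    (⊤ : Subgroup G).lowerCentralSeries n ≤ commutator G :=
  top_lowerCentralSeries_one (G := G) ▸ Subgroup.lowerCentralSeries_antitone _ hn

theorem exists_commutator_eq_zpowers_sup {p : ℕ} (hp : p.Prime)
    (hidx : (commutator G).index = p ^ 2) :
    ∃ w, commutator G = zpowers w ⊔ (⊤ : Subgroup G).lowerCentralSeries 2 := by
  set Z := (⊤ : Subgroup G).lowerCentralSeries 2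
  have hρ := QuotientGroup.mk'_surjective Z
  have hlcs := map_top_lowerCentralSeries_of_surjective hρ
  have hZ : Z ≤ commutator G := top_lowerCentralSeries_le_commutator one_le_two
  have hcomm : (commutator G).map (QuotientGroup.mk' Z) = commutator (G ⧸ Z) := by
    simpa only [top_lowerCentralSeries_one] using hlcs 1
  have hR : commutator (G ⧸ Z) ≤ center (G ⧸ Z) := by
    rw [← top_lowerCentralSeries_one, ← top_lowerCentralSeries_succ_eq_bot_iff, ← hlcs,
      Subgroup.map_eq_bot_iff, QuotientGroup.ker_mk']
  have hidxR : (commutator (G ⧸ Z)).index = p ^ 2 := by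
    rwa [← hcomm, index_map_eq _ hρ (by rwa [QuotientGroup.ker_mk'])]
  obtain ⟨w', hw'⟩ := exists_commutator_eq_zpowers hp hR hidxR
  obtain ⟨w, rfl⟩ := hρ w'
  refine ⟨w, ?_⟩
  calc commutator G = ((commutator G).map (QuotientGroup.mk' Z)).comap (QuotientGroup.mk' Z) := by
        rw [comap_map_eq, QuotientGroup.ker_mk', sup_of_le_left hZ]
    _ = ((zpowers w).map (QuotientGroup.mk' Z)).comap (QuotientGroup.mk' Z) := by
        rw [hcomm, hw', MonoidHom.map_zpowers]
    _ = zpowers w ⊔ Z := by rw [comap_map_eq, QuotientGroup.ker_mk']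

theorem centralizer_zpowers_sup_of_le_center {Z : Subgroup G} (hZ : Z ≤ center G) (w : G) :
    centralizer ((zpowers w ⊔ Z : Subgroup G) : Set G) = centralizer {w} := by
  refine le_antisymm (centralizer_le (Set.singleton_subset_iff.2 (mem_sup_left (mem_zpowers w))))
    (le_centralizer_iff.1 (sup_le (zpowers_le.2 ?_) (hZ.trans (center_le_centralizer _))))
  exact mem_centralizer_iff.2 fun g hg ↦ mem_centralizer_singleton_iff.1 hg

theorem commutator_self_eq_bot_of_relIndex_prime {H K : Subgroup G} [H.Normal]
    (hK : K ≤ centralizer H) (hp : (H.relIndex K).Prime) : ⁅K, K⁆ = ⊥ := by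
  have : Fact (H.relIndex K).Prime := ⟨hp⟩
  have : IsCyclic (K ⧸ H.subgroupOf K) := isCyclic_of_prime_card (p := H.relIndex K) rfl
  rw [commutator_self_eq_bot_iff]
  refine (QuotientGroup.mk' (H.subgroupOf K)).isMulCommutative_of_isCyclic_of_ker_le_center ?_
  rw [QuotientGroup.ker_mk']
  exact fun x hx ↦ mem_center_iff.2 fun y ↦ Subtype.ext (mem_centralizer_iff.1 (hK y.2) x hx).symm

theorem index_centralizer_commutator_eq_and_commutator_eq_bot {p : ℕ} (hp : p.Prime)
    (h3 : (⊤ : Subgroup G).lowerCentralSeries 3 = ⊥)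
    (h2 : Nat.card ((⊤ : Subgroup G).lowerCentralSeries 2) = p)
    (hidx : (commutator G).index = p ^ 2) :
    (centralizer (commutator G : Set G)).index = p ∧
      ⁅centralizer (commutator G : Set G), centralizer (commutator G : Set G)⁆ = ⊥ := by
  set Z := (⊤ : Subgroup G).lowerCentralSeries 2
  set C := centralizer (commutator G : Set G)
  have hZ : Z ≤ center G := (top_lowerCentralSeries_succ_eq_bot_iff 2).1 h3
  obtain ⟨w, hw⟩ := exists_commutator_eq_zpowers_sup hp hidx
  have hC : C = centralizer {w} := by rw [← centralizer_zpowers_sup_of_le_center hZ w, ← hw]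
  have hG'C : commutator G ≤ C := by
    rw [hC, hw]
    refine sup_le (zpowers_le.2 (mem_centralizer_singleton_iff.2 rfl))
      (hZ.trans (center_le_centralizer _))
  have hwZ : ∀ g : G, ⁅g, w⁆ ∈ Z := fun g ↦ by
    rw [← inv_mem_iff, commutatorElement_inv]
    have hwG' : w ∈ (⊤ : Subgroup G).lowerCentralSeries 1 := by
      rw [top_lowerCentralSeries_one, hw]
      exact mem_sup_left (mem_zpowers w)
    exact commutator_mem_commutator hwG' (mem_top g)
  have hdvd : C.index ∣ p := h2 ▸ hC ▸ index_centralizer_singleton_dvd_card hZ hwZ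
  have hne : C.index ≠ 1 := by
    rw [Ne, index_eq_one, centralizer_eq_top_iff_subset]
    intro hcen
    have hZbot : Z = ⊥ := commutator_top_right_eq_bot_iff_le_center.2 hcen
    rw [hZbot, card_bot] at h2
    exact hp.ne_one h2.symm
  have hCp : C.index = p := (hp.eq_one_or_self_of_dvd _ hdvd).resolve_left hne
  refine ⟨hCp, commutator_self_eq_bot_of_relIndex_prime le_rfl ?_⟩
  have hrel := relIndex_mul_index hG'C
  rw [hCp, hidx, sq] at hrel
  rwa [Nat.eq_of_mul_eq_mul_right hp.pos hrel]

end

theorem stmt9_general (p : ℕ) [Fact p.Prime] (G : Type*) [Group G]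
    (hidx : (commutator G).index = p ^ 2)
    (hsec : ((⊤ : Subgroup G).lowerCentralSeries 3).relIndex ((⊤ : Subgroup G).lowerCentralSeries 2) = p)
    (C : Subgroup G)
    (hC : ∀ g : G, g ∈ C ↔ ∀ x ∈ commutator G, ⁅g, x⁆ ∈ (⊤ : Subgroup G).lowerCentralSeries 3) :
    C.index = p ∧ (⁅C, C⁆ : Subgroup G) ≤ (⊤ : Subgroup G).lowerCentralSeries 3 := by
  set N := (⊤ : Subgroup G).lowerCentralSeries 3
  set π := QuotientGroup.mk' N
  have hπ : Function.Surjective π := QuotientGroup.mk'_surjective N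
  have hlcs := map_top_lowerCentralSeries_of_surjective hπ
  have hcomm : (commutator G).map π = commutator (G ⧸ N) := by
    simpa only [top_lowerCentralSeries_one] using hlcs 1
  have hN : N ≤ commutator G := top_lowerCentralSeries_le_commutator (by norm_num)
  have hCπ : C = (centralizer (commutator (G ⧸ N) : Set (G ⧸ N))).comap π := by
    ext g
    rw [hC, ← hcomm, mem_comap_centralizer_map_mk'_iff]
  obtain ⟨hindex, hcommC⟩ := index_centralizer_commutator_eq_and_commutator_eq_bot Fact.out
    (by rw [← hlcs, Subgroup.map_eq_bot_iff, QuotientGroup.ker_mk'])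
    (by rw [← hlcs, ← relIndex_ker, QuotientGroup.ker_mk', hsec])
    (by rw [← hcomm, index_map_eq _ hπ (by rwa [QuotientGroup.ker_mk']), hidx])
  refine ⟨by rw [hCπ, index_comap_of_surjective _ hπ, hindex], ?_⟩
  rw [← QuotientGroup.ker_mk' N, ← Subgroup.map_eq_bot_iff, map_commutator, hCπ,
    map_comap_eq_self_of_surjective hπ, hcommC]

/-- Let `G` be a finite `p`-group with `|G : G'| = p^2` and `|γ₃(G) : γ₄(G)| = p`, and let
`C = C_G(G'/γ₄(G))`. Then `C` is a maximal subgroup of `G` and `C' ≤ γ₄(G)`. -/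
theorem stmt9 (p : ℕ) [Fact p.Prime] (G : Type*) [Group G] [Finite G]
    (hG : IsPGroup p G) (hidx : (commutator G).index = p ^ 2)
    (hsec : ((⊤ : Subgroup G).lowerCentralSeries 3).relIndex ((⊤ : Subgroup G).lowerCentralSeries 2) = p)
    (C : Subgroup G)
    (hC : ∀ g : G, g ∈ C ↔ ∀ x ∈ commutator G, ⁅g, x⁆ ∈ (⊤ : Subgroup G).lowerCentralSeries 3) :
    C.index = p ∧ (⁅C, C⁆ : Subgroup G) ≤ (⊤ : Subgroup G).lowerCentralSeries 3 :=
  stmt9_general p G hidx hsec C hC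
end

section
/- Let G be a finite 2-group with |G : G'| = 4 and |G| ≥ 8. Then G is of maximal class, and every irreducible complex character of G has degree 1 or 2. -/
/-
A finite 2-group `G` with `|G : G'| = 4` has a cyclic subgroup `⟨a⟩` of index 2. This goes by
induction on `|G|`: for a central involution `r ∈ G'`, the quotient `G/⟨r⟩` has the same property,
and a lift `a` of a generator of its cyclic maximal subgroup has order `|G|/2`. Otherwise
`⟨a, r⟩` would be an abelian maximal subgroup, every commutator would lie in `⟨⁅t, a⁆⟩` for
`t ∉ ⟨a, r⟩`, and, as `t` acts on `⟨a⟩` modulo `r` by an odd power, that subgroup has order at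
most `|G|/8 < |G'|`.

If `t a t⁻¹ = a ^ s`, then `γ_{k+1}(G) = ⟨a ^ (s - 1) ^ k⟩` for `k ≥ 1`, and `|G'| = |G|/4` forces
`s - 1 = 2u` with `u` odd, so the class is `log₂ |G| - 1`. For the degrees, an eigenvector `v` of
`a` spans, together with `t v`, a `G`-stable subspace.
-/

open Subgroup hiding commutator
open scoped commutatorElement

section GroupTheory

variable {G : Type*} [Group G]

theorem Subgroup.normal_of_le_center {H : Subgroup G} (h : H ≤ center G) : H.Normal :=
  ⟨fun x hx g => by rw [mem_center_iff.mp (h hx) g, mul_inv_cancel_right]; exact hx⟩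

theorem Subgroup.exists_notMem_of_index_eq_two {H : Subgroup G} (hH : H.index = 2) :
    ∃ t, t ∉ H := by
  by_contra! h
  simp [(eq_top_iff' H).mpr h] at hH

theorem Subgroup.index_zpowers_eq_two [Finite G] {n : ℕ} (hcard : Nat.card G = 2 ^ (n + 1))
    {a : G} (ha : orderOf a = 2 ^ n) : (zpowers a).index = 2 := by
  have := (zpowers a).card_mul_index
  rw [Nat.card_zpowers, ha, hcard, pow_succ] at this
  exact Nat.eq_of_mul_eq_mul_left (by positivity) this

theorem card_commutator_eq_of_index_eq_four [Finite G] {n : ℕ} (hcard : Nat.card G = 2 ^ (n + 2))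
    (hidx : (commutator G).index = 4) : Nat.card (commutator G) = 2 ^ n := by
  have := (commutator G).card_mul_index
  rw [hidx, hcard, pow_add] at this
  omega

theorem IsPGroup.exists_orderOf_eq_prime_mem_center [Finite G] {p : ℕ} [Fact p.Prime]
    (hG : IsPGroup p G) {N : Subgroup G} [N.Normal] (hN : N ≠ ⊥) :
    ∃ r ∈ N, r ∈ center G ∧ orderOf r = p := by
  have hdvd : ∀ K : Subgroup G, K ≠ ⊥ → p ∣ Nat.card K := by
    intro K hK
    have : Nontrivial K := (nontrivial_iff_ne_bot K).mpr hK
    obtain ⟨k, hk, hcard⟩ := (hG.to_subgroup K).nontrivial_iff_card.mp this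
    exact hcard ▸ dvd_pow_self p hk.ne'
  obtain ⟨z, hz, hz1⟩ := (hG.of_equiv ConjAct.toConjAct)
    |>.exists_fixed_point_of_prime_dvd_card_of_fixed_point N (hdvd N hN) (a := 1) (by simp)
  have hzc : (z : G) ∈ center G := by
    rw [mem_center_iff]
    intro g
    have := congrArg Subtype.val (hz (ConjAct.toConjAct g))
    rw [ConjAct.Subgroup.val_conj_smul, ConjAct.toConjAct_smul] at this
    calc g * z = g * z * g⁻¹ * g := by group
      _ = z * g := by rw [this]
  have hK : N ⊓ center G ≠ ⊥ := by
    rw [Ne, eq_bot_iff_forall]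
    push Not
    exact ⟨z, ⟨z.2, hzc⟩, fun h => hz1 (Subtype.ext h).symm⟩
  obtain ⟨r, hr⟩ := exists_prime_orderOf_dvd_card' p (hdvd _ hK)
  exact ⟨r, r.2.1, r.2.2, by rwa [Subgroup.orderOf_coe]⟩

theorem commutator_le_of_index_eq_two {H K : Subgroup G} [IsMulCommutative H] (hH : H.index = 2)
    {t : G} (ht : t ∉ H) (hK : ∀ h ∈ H, ⁅t, h⁆ ∈ K) : commutator G ≤ K := by
  have hcoset : ∀ g, g ∈ H ∨ ∃ h ∈ H, g = t * h := by
    intro g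
    by_cases hg : g ∈ H
    · exact .inl hg
    · exact .inr ⟨t⁻¹ * g, (mul_mem_iff_of_index_two hH).mpr (by simp [ht, hg]), by group⟩
  have htt : t * t ∈ H := (mul_mem_iff_of_index_two hH).mpr (iff_of_false ht ht)
  rw [commutator_def, Subgroup.commutator_le]
  rintro g₁ - g₂ -
  rcases hcoset g₁ with h₁ | ⟨h₁, hh₁, rfl⟩ <;> rcases hcoset g₂ with h₂ | ⟨h₂, hh₂, rfl⟩
  · rw [commutatorElement_eq_one_iff_mul_comm.mpr (setLike_mul_comm h₁ h₂)]
    exact K.one_mem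
  · have : ⁅g₁, t * h₂⁆ = ⁅t, g₁⁆⁻¹ := calc
      ⁅g₁, t * h₂⁆ = g₁ * t * (h₂ * g₁⁻¹) * h₂⁻¹ * t⁻¹ := by rw [commutatorElement_def]; group
      _ = ⁅t, g₁⁆⁻¹ := by rw [setLike_mul_comm hh₂ (inv_mem h₁), commutatorElement_def]; group
    exact this ▸ K.inv_mem (hK g₁ h₁)
  · have : ⁅t * h₁, g₂⁆ = ⁅t, g₂⁆ := calc
      ⁅t * h₁, g₂⁆ = t * (h₁ * g₂) * h₁⁻¹ * t⁻¹ * g₂⁻¹ := by rw [commutatorElement_def]; group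
      _ = ⁅t, g₂⁆ := by rw [setLike_mul_comm hh₁ h₂, commutatorElement_def]; group
    exact this ▸ hK g₂ h₂
  · have : ⁅t * h₁, t * h₂⁆ = ⁅t, h₁⁆ * ⁅t, h₂⁆⁻¹ := calc
      ⁅t * h₁, t * h₂⁆
          = (t * h₁ * t⁻¹) * ((t * t) * (h₂ * h₁⁻¹)) * (t * t)⁻¹ * (t * h₂ * t⁻¹)⁻¹ := by
        rw [commutatorElement_def]; group
      _ = (t * h₁ * t⁻¹) * (h₁⁻¹ * h₂) * (t * h₂ * t⁻¹)⁻¹ := by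
        rw [setLike_mul_comm htt (mul_mem hh₂ (inv_mem hh₁)),
          setLike_mul_comm hh₂ (inv_mem hh₁)]; group
      _ = ⁅t, h₁⁆ * ⁅t, h₂⁆⁻¹ := by simp only [commutatorElement_def]; group
    exact this ▸ K.mul_mem (hK h₁ hh₁) (K.inv_mem (hK h₂ hh₂))

section CyclicIndexTwo

variable {a t : G} {s : ℤ}

theorem commutator_zpowers_zpow_top (ha : (zpowers a).index = 2) (ht : t ∉ zpowers a)
    (hs : t * a * t⁻¹ = a ^ s) (m : ℤ) :
    ⁅zpowers (a ^ m), ⊤⁆ = zpowers (a ^ (m * (s - 1))) := by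
  have hconj : ∀ i : ℤ, t * a ^ i * t⁻¹ = a ^ (s * i) := fun i => by
    rw [← conj_zpow, hs, ← zpow_mul]
  apply le_antisymm
  · rw [Subgroup.commutator_le]
    rintro - ⟨i, rfl⟩ g -
    by_cases hg : g ∈ zpowers a
    · obtain ⟨j, rfl⟩ := mem_zpowers_iff.mp hg
      rw [commutatorElement_eq_one_iff_commute.mpr ((Commute.refl a).zpow_zpow _ _ |>.zpow_left i)]
      exact one_mem _
    · obtain ⟨j, hj⟩ := mem_zpowers_iff.mp
        ((mul_mem_iff_of_index_two ha).mpr (by simp [ht, hg]) : t⁻¹ * g ∈ zpowers a)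
      obtain rfl : g = t * a ^ j := by rw [hj]; group
      refine mem_zpowers_iff.mpr ⟨-i, ?_⟩
      calc (a ^ (m * (s - 1))) ^ (-i) = a ^ (m * i) * a ^ (s * -(m * i)) := by
            rw [← zpow_mul, ← zpow_add]; ring_nf
        _ = a ^ (m * i) * (t * a ^ (-(m * i)) * t⁻¹) := by rw [hconj]
        _ = ⁅(a ^ m) ^ i, t * a ^ j⁆ := by rw [commutatorElement_def, ← zpow_mul]; group
  · rw [zpowers_le]
    have : ⁅t, a ^ m⁆ = a ^ (m * (s - 1)) := by
      rw [commutatorElement_def, hconj, ← zpow_neg, ← zpow_add]; ring_nf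
    rw [← this, ← commutatorElement_inv]
    exact inv_mem (Subgroup.commutator_mem_commutator (mem_zpowers _) (mem_top t))

theorem commutator_eq_zpowers_of_index_eq_two (ha : (zpowers a).index = 2)
    (ht : t ∉ zpowers a) (hs : t * a * t⁻¹ = a ^ s) :
    commutator G = zpowers (a ^ (s - 1)) := by
  have hbracket := commutator_zpowers_zpow_top ha ht hs 1
  rw [zpow_one, one_mul] at hbracket
  rw [← hbracket]
  refine le_antisymm (commutator_le_of_index_eq_two ha ht fun h hh => ?_) ?_
  · rw [← commutatorElement_inv]
    exact inv_mem (Subgroup.commutator_mem_commutator hh (mem_top t))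
  · rw [commutator_def]
    exact Subgroup.commutator_mono le_top le_rfl

theorem lowerCentralSeries_eq_zpowers_of_index_eq_two (ha : (zpowers a).index = 2)
    (ht : t ∉ zpowers a) (hs : t * a * t⁻¹ = a ^ s) (k : ℕ) :
    (⊤ : Subgroup G).lowerCentralSeries (k + 1) = zpowers (a ^ ((s - 1) ^ (k + 1))) := by
  induction k with
  | zero => rw [top_lowerCentralSeries_one, commutator_eq_zpowers_of_index_eq_two ha ht hs, pow_one]
  | succ k ih =>
    rw [Subgroup.lowerCentralSeries_succ, ih, commutator_zpowers_zpow_top ha ht hs, ← pow_succ]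

theorem exists_conj_eq_zpow_of_index_eq_two (ha : (zpowers a).index = 2) (t : G) :
    ∃ s : ℤ, t * a * t⁻¹ = a ^ s :=
  (mem_zpowers_iff.mp ((normal_of_index_eq_two ha).conj_mem a (mem_zpowers a) t)).imp
    fun _ h => h.symm

end CyclicIndexTwo

theorem exists_odd_of_orderOf_zpow {x : G} {k : ℕ} {m : ℤ} (hx : orderOf x = 2 ^ (k + 2))
    (hxm : orderOf (x ^ m) = 2 ^ (k + 1)) : ∃ u : ℤ, Odd u ∧ m = 2 * u := by
  have hdvd : ∀ j : ℕ, (2 : ℤ) ^ (k + 2) ∣ m * 2 ^ j ↔ 2 ^ (k + 1) ∣ 2 ^ j := by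
    intro j
    rw [← Nat.cast_ofNat, ← Nat.cast_pow, ← hx, orderOf_dvd_iff_zpow_eq_one, zpow_mul,
      ← hxm, orderOf_dvd_iff_pow_eq_one]
    norm_cast
  obtain ⟨u, rfl⟩ : (2 : ℤ) ∣ m := by
    have := (hdvd (k + 1)).mpr dvd_rfl
    rw [pow_succ _ (k + 1), mul_comm m] at this
    exact (mul_dvd_mul_iff_left (by positivity)).mp this
  refine ⟨u, Int.not_even_iff_odd.mp fun ⟨v, hv⟩ => ?_, rfl⟩
  have := (hdvd k).mp ⟨v, by rw [hv]; ring⟩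
  exact absurd (Nat.le_of_dvd (by positivity) this) (by simp [Nat.pow_le_pow_iff_right])

theorem exists_odd_of_conj_eq_zpow [Finite G] {n : ℕ} (hcard : Nat.card G = 2 ^ (n + 3))
    (hidx : (commutator G).index = 4) {a t : G} {s : ℤ} (ha : orderOf a = 2 ^ (n + 2))
    (ht : t ∉ zpowers a) (hs : t * a * t⁻¹ = a ^ s) : ∃ u : ℤ, Odd u ∧ s - 1 = 2 * u := by
  apply exists_odd_of_orderOf_zpow ha
  rw [← Nat.card_zpowers,
    ← commutator_eq_zpowers_of_index_eq_two (index_zpowers_eq_two hcard ha) ht hs]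
  exact card_commutator_eq_of_index_eq_four hcard hidx

theorem exists_orderOf_eq_four_of_card_eq_eight [Finite G] (hcard : Nat.card G = 2 ^ 3)
    (hG : commutator G ≠ ⊥) : ∃ a : G, orderOf a = 4 := by
  by_contra! h
  apply hG
  rw [commutator_eq_bot_iff]
  by_cases h8 : ∃ x : G, orderOf x = 8
  · obtain ⟨x, hx⟩ := h8
    have : IsCyclic G := isCyclic_of_orderOf_eq_card x (hx.trans hcard.symm)
    infer_instance
  · push Not at h8
    refine ⟨⟨Commute.of_orderOf_dvd_two fun g => ?_⟩⟩
    obtain ⟨k, hk, hg⟩ := (Nat.dvd_prime_pow Nat.prime_two).mp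
      (show orderOf g ∣ 2 ^ 3 from hcard ▸ orderOf_dvd_natCard g)
    interval_cases k <;> simp_all

theorem commutator_le_zpowers_of_index_eq_two {H : Subgroup G} [IsMulCommutative H]
    (hH : H.index = 2) {t a : G} (ht : t ∉ H) (ha : a ∈ H)
    (hgen : ∀ h ∈ H, ∃ i : ℤ, h * a ^ (-i) ∈ center G) : commutator G ≤ zpowers ⁅t, a⁆ := by
  have hta : ⁅t, a⁆ ∈ H := by
    rw [commutatorElement_def]
    exact mul_mem ((normal_of_index_eq_two hH).conj_mem a ha t) (inv_mem ha)
  refine commutator_le_of_index_eq_two hH ht fun h hh => mem_zpowers_iff.mpr ?_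
  obtain ⟨i, hi⟩ := hgen h hh
  obtain ⟨c, hc, rfl⟩ : ∃ c ∈ center G, h = c * a ^ i := ⟨_, hi, by group⟩
  clear hh hi
  refine ⟨i, ?_⟩
  calc ⁅t, a⁆ ^ i = (⁅t, a⁆ * a) ^ i * a ^ (-i) := by
        rw [Commute.mul_zpow (setLike_mul_comm hta ha), zpow_neg, mul_inv_cancel_right]
    _ = t * a ^ i * t⁻¹ * a ^ (-i) := by
        rw [commutatorElement_def, inv_mul_cancel_right, conj_zpow]
    _ = c * (t * a ^ i * t⁻¹ * a ^ (-i)) * c⁻¹ := by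
        rw [← mem_center_iff.mp hc, mul_inv_cancel_right]
    _ = ⁅t, c * a ^ i⁆ := by
        rw [commutatorElement_def, ← mul_assoc t c, mem_center_iff.mp hc t]; group

theorem index_commutator_quotient {R : Subgroup G} [R.Normal] (hR : R ≤ commutator G) :
    (commutator (G ⧸ R)).index = (commutator G).index := by
  have hsurj := QuotientGroup.mk'_surjective R
  rw [← index_map_eq (H := commutator G) hsurj (by rwa [QuotientGroup.ker_mk']),
    commutator_def, commutator_def, Subgroup.map_commutator, map_top_of_surjective _ hsurj]

theorem card_quotient_eq_of_card_eq_two [Finite G] {R : Subgroup G} [R.Normal] (hR : Nat.card R = 2)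
    {n : ℕ} (hcard : Nat.card G = 2 ^ (n + 1)) : Nat.card (G ⧸ R) = 2 ^ n := by
  have := R.card_eq_card_quotient_mul_card_subgroup
  rw [hcard, hR, pow_succ] at this
  exact (Nat.eq_of_mul_eq_mul_right two_pos this).symm

theorem exists_mul_zpow_mem_of_mem_comap_zpowers {R : Subgroup G} [R.Normal] {a h : G}
    (hh : h ∈ (zpowers (a : G ⧸ R)).comap (QuotientGroup.mk' R)) :
    ∃ i : ℤ, h * a ^ (-i) ∈ R := by
  obtain ⟨i, hi⟩ := mem_zpowers_iff.mp (mem_comap.mp hh)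
  refine ⟨i, ?_⟩
  have hi : (h : G ⧸ R) = (a : G ⧸ R) ^ i := hi.symm
  rw [← QuotientGroup.eq_one_iff]
  simp [hi]

theorem isMulCommutative_comap_zpowers {R : Subgroup G} [R.Normal] (hRc : R ≤ center G) (a : G) :
    IsMulCommutative ((zpowers (a : G ⧸ R)).comap (QuotientGroup.mk' R)) :=
  IsMulCommutative.of_setLike_mul_comm fun x hx y hy => by
    obtain ⟨i, hi⟩ := exists_mul_zpow_mem_of_mem_comap_zpowers hx
    obtain ⟨j, hj⟩ := exists_mul_zpow_mem_of_mem_comap_zpowers hy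
    obtain ⟨c, hc, rfl⟩ : ∃ c ∈ center G, x = c * a ^ i := ⟨_, hRc hi, by group⟩
    obtain ⟨d, hd, rfl⟩ : ∃ d ∈ center G, y = d * a ^ j := ⟨_, hRc hj, by group⟩
    refine Commute.mul_left (.mul_right ?_ ?_) (.mul_right ?_ ?_)
    · exact mem_center_iff.mp hd c
    · exact (mem_center_iff.mp hc _).symm
    · exact mem_center_iff.mp hd _
    · exact Commute.zpow_zpow_self a i j

theorem orderOf_eq_of_orderOf_mk_eq [Finite G] {R : Subgroup G} [R.Normal]
    (hRc : R ≤ center G) (hR : Nat.card R = 2) (hRG : R ≤ commutator G)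
    (hidx : (commutator G).index = 4) {n : ℕ} (hcard : Nat.card G = 2 ^ (n + 4))
    {a : G} (ha : orderOf (a : G ⧸ R) = 2 ^ (n + 2)) : orderOf a = 2 ^ (n + 3) := by
  have hsq : ∀ r ∈ R, r ^ 2 = 1 := fun r hr =>
    orderOf_dvd_iff_pow_eq_one.mp (hR ▸ R.orderOf_dvd_natCard hr)
  have hpow : a ^ 2 ^ (n + 2) ∈ R := by
    rw [← QuotientGroup.eq_one_iff, QuotientGroup.mk_pow, ← ha, pow_orderOf_eq_one]
  refine orderOf_eq_prime_pow (fun h => ?_) (by rw [pow_succ, pow_mul]; exact hsq _ hpow)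
  have hQcard : Nat.card (G ⧸ R) = 2 ^ (n + 3) := card_quotient_eq_of_card_eq_two hR hcard
  have hQidx : (commutator (G ⧸ R)).index = 4 := (index_commutator_quotient hRG).trans hidx
  set H := (zpowers (a : G ⧸ R)).comap (QuotientGroup.mk' R)
  have hH : H.index = 2 := by
    rw [index_comap_of_surjective _ (QuotientGroup.mk'_surjective R),
      index_zpowers_eq_two hQcard ha]
  have := isMulCommutative_comap_zpowers hRc a
  obtain ⟨t, ht⟩ := exists_notMem_of_index_eq_two hH
  have htQ : (t : G ⧸ R) ∉ zpowers (a : G ⧸ R) := ht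
  obtain ⟨s, hs⟩ := exists_conj_eq_zpow_of_index_eq_two (index_zpowers_eq_two hQcard ha) _
  obtain ⟨u, -, hu⟩ := exists_odd_of_conj_eq_zpow hQcard hQidx ha htQ hs
  set c := ⁅t, a⁆ * a ^ (-(s - 1)) with hc
  have hcR : c ∈ R := by
    rw [← QuotientGroup.eq_one_iff]
    simp only [hc, QuotientGroup.mk_mul, QuotientGroup.mk_inv, QuotientGroup.mk_zpow,
      commutatorElement_def, hs]
    group
  have hta : ⁅t, a⁆ ^ 2 ^ (n + 1) = 1 := calc
    ⁅t, a⁆ ^ 2 ^ (n + 1) = (c * a ^ (2 * u)) ^ 2 ^ (n + 1) := by rw [← hu, hc]; group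
    _ = c ^ 2 ^ (n + 1) * (a ^ 2 ^ (n + 2)) ^ u := by
      rw [Commute.mul_pow (mem_center_iff.mp (hRc hcR) _).symm]
      congr 1
      rw [← zpow_natCast, ← zpow_mul, ← zpow_natCast, ← zpow_mul]
      push_cast
      ring_nf
    _ = 1 := by rw [pow_succ', pow_mul, hsq c hcR, h, one_pow, one_zpow, one_mul]
  have hle := card_le_of_le <| commutator_le_zpowers_of_index_eq_two hH ht
    (mem_comap.mpr (mem_zpowers _)) fun _ hh =>
      (exists_mul_zpow_mem_of_mem_comap_zpowers hh).imp fun _ hi => hRc hi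
  rw [card_commutator_eq_of_index_eq_four (n := n + 2) hcard hidx, Nat.card_zpowers] at hle
  have := hle.trans (Nat.le_of_dvd (by positivity) (orderOf_dvd_of_pow_eq_one hta))
  rw [Nat.pow_le_pow_iff_right (by norm_num)] at this
  omega

theorem exists_orderOf_eq_of_index_commutator_eq_four [Finite G] (hG : IsPGroup 2 G)
    (hidx : (commutator G).index = 4) {n : ℕ} (hcard : Nat.card G = 2 ^ (n + 3)) :
    ∃ a : G, orderOf a = 2 ^ (n + 2) := by
  induction n generalizing G with
  | zero =>
    refine exists_orderOf_eq_four_of_card_eq_eight hcard fun h => ?_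
    rw [h, index_bot, hcard] at hidx
    norm_num at hidx
  | succ n ih =>
    have : Fact (Nat.Prime 2) := ⟨Nat.prime_two⟩
    have hG' : commutator G ≠ ⊥ := by
      intro h
      have := card_commutator_eq_of_index_eq_four hcard hidx
      rw [h, card_bot] at this
      exact absurd this.symm (Nat.one_lt_two_pow (by omega)).ne'
    obtain ⟨r, hrG, hrc, hr⟩ := hG.exists_orderOf_eq_prime_mem_center hG'
    have hRc : zpowers r ≤ center G := zpowers_le.mpr hrc
    have := normal_of_le_center hRc
    have hR : Nat.card (zpowers r) = 2 := by rw [Nat.card_zpowers, hr]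
    obtain ⟨a, ha⟩ := ih (hG.to_quotient _)
      ((index_commutator_quotient (zpowers_le.mpr hrG)).trans hidx)
      (card_quotient_eq_of_card_eq_two hR hcard)
    obtain ⟨a, rfl⟩ := QuotientGroup.mk_surjective a
    exact ⟨a, orderOf_eq_of_orderOf_mk_eq hRc hR (zpowers_le.mpr hrG) hidx hcard ha⟩

theorem nilpotencyClass_eq_of_index_commutator_eq_four [Finite G] (hG : IsPGroup 2 G)
    (hidx : (commutator G).index = 4) {n : ℕ} (hcard : Nat.card G = 2 ^ (n + 3)) :
    Group.nilpotencyClass G = n + 2 := by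
  have : Fact (Nat.Prime 2) := ⟨Nat.prime_two⟩
  have := hG.isNilpotent
  obtain ⟨a, ha⟩ := exists_orderOf_eq_of_index_commutator_eq_four hG hidx hcard
  have ha2 := index_zpowers_eq_two hcard ha
  obtain ⟨t, ht⟩ := exists_notMem_of_index_eq_two ha2
  obtain ⟨s, hs⟩ := exists_conj_eq_zpow_of_index_eq_two ha2 t
  obtain ⟨u, hu, hsu⟩ := exists_odd_of_conj_eq_zpow hcard hidx ha ht hs
  have hlcs : ∀ k : ℕ, (⊤ : Subgroup G).lowerCentralSeries (k + 1) = ⊥ ↔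
      (2 : ℤ) ^ (n + 2) ∣ 2 ^ (k + 1) * u ^ (k + 1) := fun k => by
    rw [lowerCentralSeries_eq_zpowers_of_index_eq_two ha2 ht hs, zpowers_eq_bot,
      ← orderOf_dvd_iff_zpow_eq_one, ha, hsu, mul_pow]
    push_cast
    rfl
  refine le_antisymm (Subgroup.lowerCentralSeries_eq_bot_iff_nilpotencyClass_le.mp
    ((hlcs (n + 1)).mpr (dvd_mul_right _ _))) (not_lt.mp fun hlt => ?_)
  have := (hlcs n).mp (Subgroup.lowerCentralSeries_eq_bot_iff_nilpotencyClass_le.mpr (by omega))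
  rw [pow_succ _ (n + 1), mul_dvd_mul_iff_left (by positivity)] at this
  exact Int.not_even_iff_odd.mpr hu.pow (even_iff_two_dvd.mpr this)

end GroupTheory

namespace FDRep

open CategoryTheory

variable {k G : Type*} [Field k]

lemma finrank_pos_of_simple [Monoid G] (V : FDRep k G) [Simple V] : 0 < Module.finrank k V := by
  by_contra h
  have : Subsingleton V := Module.finrank_zero_iff (R := k).mp (by omega)
  exact id_nonzero V (Action.Hom.ext (by ext x; exact Subsingleton.elim _ _))

lemma finrank_subrepresentation_eq_of_simple [Monoid G] (V : FDRep k G) [Simple V]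
    (W : Subrepresentation V.ρ) (hW : W.toSubmodule ≠ ⊥) :
    Module.finrank k W.toSubmodule = Module.finrank k V := by
  let ι : FDRep.of W.toRepresentation ⟶ V :=
    { hom := FGModuleCat.ofHom W.toSubmodule.subtype
      comm := fun _ => rfl }
  have : Mono ι := by
    refine ⟨fun f g hfg => Action.Hom.ext ?_⟩
    ext x
    exact congrArg (fun q => q.hom.hom.hom x) hfg
  have hι : ι ≠ 0 := by
    obtain ⟨x, hx, hx0⟩ := W.toSubmodule.ne_bot_iff.mp hW
    intro h
    have : ι.hom.hom.hom (⟨x, hx⟩ : W.toSubmodule) =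
        (0 : FDRep.of W.toRepresentation ⟶ V).hom.hom.hom (⟨x, hx⟩ : W.toSubmodule) := by
      rw [h]
    exact hx0 this
  have : IsIso ι := isIso_of_mono_of_nonzero hι
  exact (isoToLinearEquiv (asIso ι)).finrank_eq

lemma finrank_le_two_of_index_zpowers_eq_two [Group G] [Finite G] [IsAlgClosed k]
    (V : FDRep k G) [Simple V] {a : G} (ha : (zpowers a).index = 2) :
    Module.finrank k V ≤ 2 := by
  classical
  have : Nontrivial V := Module.nontrivial_of_finrank_pos (finrank_pos_of_simple V)
  obtain ⟨μ, hμ⟩ := Module.End.exists_eigenvalue (V.ρ a)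
  obtain ⟨v, hv⟩ := hμ.exists_hasEigenvector
  have heigen : ∀ h ∈ zpowers a, ∃ c : k, V.ρ h v = c • v := by
    intro h hh
    obtain ⟨n, rfl⟩ := (isOfFinOrder_of_finite a).mem_powers_iff_mem_zpowers.mpr hh
    exact ⟨μ ^ n, by rw [map_pow]; exact hv.pow_apply n⟩
  obtain ⟨t, ht⟩ := exists_notMem_of_index_eq_two ha
  let W : Submodule k V := Submodule.span k {v, V.ρ t v}
  have horbit : ∀ g, V.ρ g v ∈ W := by
    intro g
    by_cases hg : g ∈ zpowers a
    · obtain ⟨c, hc⟩ := heigen g hg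
      rw [hc]
      exact W.smul_mem c (Submodule.subset_span (by simp))
    · obtain ⟨c, hc⟩ := heigen (t⁻¹ * g) ((mul_mem_iff_of_index_two ha).mpr (by simp [ht, hg]))
      have : V.ρ g v = c • V.ρ t v := by
        rw [← map_smul, ← hc, ← Module.End.mul_apply, ← map_mul, mul_inv_cancel_left]
      rw [this]
      exact W.smul_mem c (Submodule.subset_span (by simp))
  let W' : Subrepresentation V.ρ :=
    { toSubmodule := W
      apply_mem_toSubmodule g := (Submodule.span_le (p := W.comap (V.ρ g))).mpr <| by
        rintro y (rfl | rfl)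
        · exact horbit g
        · rw [SetLike.mem_coe, Submodule.mem_comap, ← Module.End.mul_apply, ← map_mul]
          exact horbit _ }
  have hW : W ≠ ⊥ := by
    rw [Submodule.ne_bot_iff]
    exact ⟨v, Submodule.subset_span (by simp), hv.2⟩
  rw [← finrank_subrepresentation_eq_of_simple V W' hW]
  calc Module.finrank k W ≤ ({v, V.ρ t v} : Set V).toFinset.card := finrank_span_le_card _
    _ ≤ 2 := by rw [Set.toFinset_insert, Set.toFinset_singleton]; exact Finset.card_le_two

end FDRep

/-- Let `G` be a finite `2`-group with `|G : G'| = 4` and `|G| ≥ 8`. Then `G` is of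
maximal class, and every irreducible complex character of `G` has degree `1` or `2`. -/
theorem stmt18 (G : Type) [Group G] [Finite G] (hG : IsPGroup 2 G)
    (hidx : (commutator G).index = 4) (hcard : 8 ≤ Nat.card G) :
    (∃ n : ℕ, Nat.card G = 2 ^ n ∧
      Group.nilpotencyClass G = n - 1) ∧
    ∀ (V : FDRep ℂ G), CategoryTheory.Simple V →
      Module.finrank ℂ V = 1 ∨ Module.finrank ℂ V = 2 := by
  have : Fact (Nat.Prime 2) := ⟨Nat.prime_two⟩
  obtain ⟨N, hN⟩ := IsPGroup.iff_card.mp hG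
  obtain ⟨n, rfl⟩ : ∃ n, N = n + 3 := ⟨N - 3, by
    have : 2 ^ 3 ≤ 2 ^ N := hN ▸ hcard
    have := (Nat.pow_le_pow_iff_right (by norm_num)).mp this
    omega⟩
  obtain ⟨a, ha⟩ := exists_orderOf_eq_of_index_commutator_eq_four hG hidx hN
  refine ⟨⟨n + 3, hN, nilpotencyClass_eq_of_index_commutator_eq_four hG hidx hN⟩, fun V _ => ?_⟩
  have := FDRep.finrank_pos_of_simple V
  have := FDRep.finrank_le_two_of_index_zpowers_eq_two V (index_zpowers_eq_two hN ha)
  omega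
end
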